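/- Take r = 11/31 (so x = √(1 − (11/31)²)/2, y = 11/62) and let Λ be the subgroup of ℤ² generated by (7, −4) and (3, 4), which has index 40 in ℤ². Then the separation of the induced 40-colouring of the tiles T(i, j) equals 137/31, and this value is attained. -/

import Mathlib

noncomputable section

/-- The Euclidean plane ℝ². -/
abbrev Plane := EuclideanSpace ℝ (Fin 2)

/-- The point (a, b) of the Euclidean plane. -/
def pt (a b : ℝ) : Plane := WithLp.toLp 2 ![a, b]

/-- The semi-regular hexagon K(r): with y = r/2 and x = √(1 − r²)/2, the closed convex
hull of the six points (0, 1/2), (x, y), (x, −y), (0, −1/2), (−x, −y), (−x, y). -/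
def hexK (r : ℝ) : Set Plane :=
  convexHull ℝ
    {pt 0 (1 / 2), pt (Real.sqrt (1 - r ^ 2) / 2) (r / 2),
      pt (Real.sqrt (1 - r ^ 2) / 2) (-(r / 2)), pt 0 (-(1 / 2)),
      pt (-(Real.sqrt (1 - r ^ 2) / 2)) (-(r / 2)),
      pt (-(Real.sqrt (1 - r ^ 2) / 2)) (r / 2)}

/-- The center c(i, j) = ((2i + j)·x, j·(y + 1/2)) of the tile with index (i, j). -/
def center (r : ℝ) (i j : ℤ) : Plane :=
  pt ((2 * (i : ℝ) + (j : ℝ)) * (Real.sqrt (1 - r ^ 2) / 2)) ((j : ℝ) * (r / 2 + 1 / 2))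

/-- The tile T(i, j) = c(i, j) + K(r). -/
def tile (r : ℝ) (i j : ℤ) : Set Plane :=
  (fun p => center r i j + p) '' hexK r

/-- The set of distances realized by points in two distinct same-coloured tiles,
for the colouring of the tiles T(i, j) by the cosets of a subgroup Λ ≤ ℤ²:
tiles T(i, j) and T(i', j') get the same colour iff (i − i', j − j') ∈ Λ.
The separation of the colouring is the infimum of this set. -/
def sameColourDists (r : ℝ) (Λ : AddSubgroup (ℤ × ℤ)) : Set ℝ :=
  {d : ℝ | ∃ (i j i' j' : ℤ) (p q : Plane),
    (i, j) ≠ (i', j') ∧ (i - i', j - j') ∈ Λ ∧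
    p ∈ tile r i j ∧ q ∈ tile r i' j' ∧ d = dist p q}

end

/-!
The subgroup `Λ` is the kernel of `(a, b) ↦ 4a + 7b` onto `ℤ/40`, so its nonzero elements are
the `(a, b)` with `2a + b = 10s`, `b = 4t`, `s ≡ t [ZMOD 2]` and `(s, t) ≠ 0`. The centres of two
tiles whose indices differ by such an element differ by `(10 s x, 84 t / 31)`, and points of
the two tiles differ by that vector plus a point of `K − K`, which lies in the intersection of
four symmetric strips. If `|s| ≥ 2` or `|t| ≥ 2`, a single coordinate already has size
`≥ 137/31`; the remaining case `|s| = |t| = 1` reduces by symmetry to one planar inequality.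
The bound is attained by the bottom vertex of `T(0, 0)` and the top vertex of `T(4, -8)`.
-/

local notation "Λ" => AddSubgroup.closure {(((7) : ℤ), ((-4) : ℤ)), (((3) : ℤ), ((4) : ℤ))}

@[simp] lemma pt_apply_zero (a b : ℝ) : pt a b 0 = a := rfl

@[simp] lemma pt_apply_one (a b : ℝ) : pt a b 1 = b := rfl

lemma norm_sq_eq (v : Plane) : ‖v‖ ^ 2 = v 0 ^ 2 + v 1 ^ 2 := by
  simp [EuclideanSpace.norm_sq_eq, Fin.sum_univ_two]

lemma center_sub_center (r : ℝ) (i j i' j' : ℤ) :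
    center r i j - center r i' j' = center r (i - i') (j - j') := by
  ext k
  fin_cases k <;> simp [center, pt] <;> ring

lemma dist_center_add_center_add (r : ℝ) (i j i' j' : ℤ) (u v : Plane) :
    dist (center r i j + u) (center r i' j' + v) = ‖center r (i - i') (j - j') + (u - v)‖ := by
  rw [dist_eq_norm, ← center_sub_center, add_sub_add_comm]

lemma mem_halfPlane_of_mem_convexHull {S : Set Plane} {α β c : ℝ}
    (hS : ∀ w ∈ S, α * w 0 + β * w 1 ≤ c) {v : Plane} (hv : v ∈ convexHull ℝ S) :
    α * v 0 + β * v 1 ≤ c := by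
  have hlin : IsLinearMap ℝ (fun u : Plane => α * u 0 + β * u 1) :=
    ⟨fun u w => by simp only [PiLp.add_apply]; ring,
      fun d u => by simp only [PiLp.smul_apply, smul_eq_mul]; ring⟩
  exact convexHull_min hS (convex_halfSpace_le hlin c) hv

lemma abs_le_of_mem_convexHull {S : Set Plane} {α β c : ℝ}
    (hS : ∀ w ∈ S, |α * w 0 + β * w 1| ≤ c) {v : Plane} (hv : v ∈ convexHull ℝ S) :
    |α * v 0 + β * v 1| ≤ c := by
  have hle := mem_halfPlane_of_mem_convexHull (fun w hw => (abs_le.1 (hS w hw)).2) hv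
  have hge := mem_halfPlane_of_mem_convexHull (α := -α) (β := -β)
    (fun w hw => by linarith [(abs_le.1 (hS w hw)).1]) hv
  exact abs_le.2 ⟨by linarith, hle⟩

lemma hexK_bounds {r : ℝ} (hr₀ : 0 ≤ r) (hr₁ : r ≤ 1) {v : Plane} (hv : v ∈ hexK r) :
    |v 0| ≤ √(1 - r ^ 2) / 2 ∧ |v 1| ≤ 1 / 2 ∧
      |(1 - r) * v 0 + 2 * (√(1 - r ^ 2) / 2) * v 1| ≤ √(1 - r ^ 2) / 2 ∧
      |(1 - r) * v 0 - 2 * (√(1 - r ^ 2) / 2) * v 1| ≤ √(1 - r ^ 2) / 2 := by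
  unfold hexK at hv
  set x := √(1 - r ^ 2) / 2
  have hx : 0 ≤ x := by positivity
  have strip (α β c : ℝ) (h : ∀ w ∈ ({pt 0 (1 / 2), pt x (r / 2), pt x (-(r / 2)),
      pt 0 (-(1 / 2)), pt (-x) (-(r / 2)), pt (-x) (r / 2)} : Set Plane),
      |α * w 0 + β * w 1| ≤ c) : |α * v 0 + β * v 1| ≤ c :=
    abs_le_of_mem_convexHull h hv
  have h₀ := strip 1 0 x ?_
  have h₁ := strip 0 1 (1 / 2) ?_
  have h₂ := strip (1 - r) (2 * x) x ?_
  have h₃ := strip (1 - r) (-(2 * x)) x ?_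
  · exact ⟨by simpa using h₀, by simpa using h₁, h₂, by simpa [sub_eq_add_neg] using h₃⟩
  all_goals
    rintro w (rfl | rfl | rfl | rfl | rfl | rfl) <;>
      simp only [pt_apply_zero, pt_apply_one, abs_le] <;> constructor <;> nlinarith

lemma hexK_sub_bounds {r : ℝ} (hr₀ : 0 ≤ r) (hr₁ : r ≤ 1) {u v : Plane} (hu : u ∈ hexK r)
    (hv : v ∈ hexK r) :
    |(u - v) 0| ≤ 2 * (√(1 - r ^ 2) / 2) ∧ |(u - v) 1| ≤ 1 ∧
      |(1 - r) * (u - v) 0 + 2 * (√(1 - r ^ 2) / 2) * (u - v) 1| ≤ 2 * (√(1 - r ^ 2) / 2) ∧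
      |(1 - r) * (u - v) 0 - 2 * (√(1 - r ^ 2) / 2) * (u - v) 1| ≤ 2 * (√(1 - r ^ 2) / 2) := by
  obtain ⟨hu0, hu1, hu2, hu3⟩ := hexK_bounds hr₀ hr₁ hu
  obtain ⟨hv0, hv1, hv2, hv3⟩ := hexK_bounds hr₀ hr₁ hv
  simp only [PiLp.sub_apply]
  refine ⟨?_, ?_, ?_, ?_⟩
  · linarith [abs_sub (u 0) (v 0)]
  · linarith [abs_sub (u 1) (v 1)]
  · rw [mul_sub, mul_sub, sub_add_sub_comm]
    linarith [abs_sub ((1 - r) * u 0 + 2 * (√(1 - r ^ 2) / 2) * u 1)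
      ((1 - r) * v 0 + 2 * (√(1 - r ^ 2) / 2) * v 1)]
  · rw [mul_sub, mul_sub, sub_sub_sub_comm]
    linarith [abs_sub ((1 - r) * u 0 - 2 * (√(1 - r ^ 2) / 2) * u 1)
      ((1 - r) * v 0 - 2 * (√(1 - r ^ 2) / 2) * v 1)]

def colourHom : ℤ × ℤ →+ ZMod 40 where
  toFun p := (4 * p.1 + 7 * p.2 : ℤ)
  map_zero' := by simp
  map_add' p q := by push_cast [Prod.fst_add, Prod.snd_add]; ring

lemma colourHom_apply (a b : ℤ) : colourHom (a, b) = ((4 * a + 7 * b : ℤ) : ZMod 40) := rfl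

lemma colourHom_surjective : Function.Surjective colourHom := by
  intro c
  obtain ⟨n, rfl⟩ := ZMod.intCast_surjective c
  exact ⟨(2 * n, -n), by rw [colourHom_apply]; congr 1; ring⟩

lemma closure_eq_ker_colourHom : Λ = colourHom.ker := by
  apply le_antisymm
  · rw [AddSubgroup.closure_le]
    rintro p (rfl | rfl) <;> rw [SetLike.mem_coe, AddMonoidHom.mem_ker, colourHom_apply] <;> decide
  · rintro ⟨a, b⟩ hab
    rw [AddMonoidHom.mem_ker, colourHom_apply, ZMod.intCast_zmod_eq_zero_iff_dvd] at hab
    have hcomb : ((a, b) : ℤ × ℤ) =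
        ((a - 3 * (b / 4)) / 10) • ((7 : ℤ), (-4 : ℤ)) +
          ((a - 3 * (b / 4)) / 10 + b / 4) • ((3 : ℤ), (4 : ℤ)) := by
      simp only [Prod.smul_mk, smul_eq_mul, Prod.mk_add_mk, Prod.mk.injEq]
      omega
    rw [hcomb]
    exact add_mem (zsmul_mem (AddSubgroup.subset_closure (by simp)) _)
      (zsmul_mem (AddSubgroup.subset_closure (by simp)) _)

lemma index_closure : (Λ).index = 40 := by
  rw [closure_eq_ker_colourHom, AddSubgroup.index_ker,
    AddMonoidHom.range_eq_top.mpr colourHom_surjective, Nat.card_congr AddSubgroup.topEquiv.toEquiv,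
    Nat.card_zmod]

lemma exists_of_mem_closure {a b : ℤ} (h : (a, b) ∈ Λ) :
    ∃ s t : ℤ, 2 * a + b = 10 * s ∧ b = 4 * t ∧ s ≡ t [ZMOD 2] := by
  rw [closure_eq_ker_colourHom, AddMonoidHom.mem_ker, colourHom_apply,
    ZMod.intCast_zmod_eq_zero_iff_dvd] at h
  exact ⟨(2 * a + b) / 10, b / 4, by omega, by omega, by unfold Int.ModEq; omega⟩

lemma sq_halfWidth : (√(1 - (11 / 31 : ℝ) ^ 2) / 2) ^ 2 = 210 / 961 := by
  rw [div_pow, Real.sq_sqrt (by norm_num)]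
  norm_num

-- Equality holds at the vertex `e = (-2x, -11/31)` of `K - K`.
lemma sq_le_diagonal {x e₀ e₁ : ℝ} (hx : 0 < x) (hx2 : x ^ 2 = 210 / 961) (h₀ : -(2 * x) ≤ e₀)
    (h₁ : -(2 * x) ≤ 20 / 31 * e₀ + 2 * x * e₁) :
    (137 / 31) ^ 2 ≤ (10 * x + e₀) ^ 2 + (84 / 31 + e₁) ^ 2 := by
  nlinarith [mul_nonneg hx.le (sq_nonneg (e₀ + 2 * x)), mul_nonneg hx.le (sq_nonneg (e₁ + 11 / 31)),
    mul_nonneg hx.le (by linarith : (0 : ℝ) ≤ e₀ + 2 * x), sq_nonneg (e₀ + 2 * x),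
    sq_nonneg (e₁ + 11 / 31)]

lemma sq_le_of_ne_zero {x e₀ e₁ : ℝ} (hx : 0 < x) (hx2 : x ^ 2 = 210 / 961)
    (h₀ : |e₀| ≤ 2 * x) (h₁ : |e₁| ≤ 1) (hp : |20 / 31 * e₀ + 2 * x * e₁| ≤ 2 * x)
    (hm : |20 / 31 * e₀ - 2 * x * e₁| ≤ 2 * x) {s t : ℤ} (hst : s ≡ t [ZMOD 2])
    (hne : (s, t) ≠ 0) :
    (137 / 31) ^ 2 ≤ (10 * s * x + e₀) ^ 2 + (84 * t / 31 + e₁) ^ 2 := by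
  rw [abs_le] at h₀ h₁ hp hm
  have hcases : 2 ≤ s ∨ s ≤ -2 ∨ 2 ≤ t ∨ t ≤ -2 ∨ (s = 1 ∨ s = -1) ∧ (t = 1 ∨ t = -1) := by
    rw [Ne, Prod.ext_iff] at hne
    unfold Int.ModEq at hst
    simp only [Prod.fst_zero, Prod.snd_zero] at hne
    omega
  rcases hcases with hs | hs | ht | ht | ⟨rfl | rfl, rfl | rfl⟩
  · have hs' : (2 : ℝ) ≤ s := by exact_mod_cast hs
    nlinarith [mul_le_mul_of_nonneg_right hs' hx.le]
  · have hs' : (s : ℝ) ≤ -2 := by exact_mod_cast hs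
    nlinarith [mul_le_mul_of_nonneg_right hs' hx.le]
  · have ht' : (2 : ℝ) ≤ t := by exact_mod_cast ht
    nlinarith
  · have ht' : (t : ℝ) ≤ -2 := by exact_mod_cast ht
    nlinarith
  · push_cast
    linarith [sq_le_diagonal hx hx2 h₀.1 hp.1]
  · push_cast
    linarith [sq_le_diagonal hx hx2 h₀.1 (e₁ := -e₁) (by linarith)]
  · push_cast
    linarith [sq_le_diagonal hx hx2 (e₀ := -e₀) (e₁ := e₁) (by linarith) (by linarith)]
  · push_cast
    linarith [sq_le_diagonal hx hx2 (e₀ := -e₀) (e₁ := -e₁) (by linarith) (by linarith)]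

lemma le_of_mem_sameColourDists {d : ℝ} (hd : d ∈ sameColourDists (11 / 31) Λ) :
    137 / 31 ≤ d := by
  obtain ⟨i, j, i', j', _, _, hne, hmem, ⟨u, hu, rfl⟩, ⟨v, hv, rfl⟩, rfl⟩ := hd
  obtain ⟨s, t, hs, ht, hst⟩ := exists_of_mem_closure hmem
  have hst₀ : (s, t) ≠ 0 := by
    intro h
    simp only [Prod.ext_iff, Prod.fst_zero, Prod.snd_zero, Ne] at h hne
    omega
  obtain ⟨h₀, h₁, hp, hm⟩ := hexK_sub_bounds (by norm_num) (by norm_num) (r := 11 / 31) hu hv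
  set x := √(1 - (11 / 31 : ℝ) ^ 2) / 2
  have hnorm : ‖center (11 / 31) (i - i') (j - j') + (u - v)‖ ^ 2 =
      (10 * s * x + (u - v) 0) ^ 2 + (84 * t / 31 + (u - v) 1) ^ 2 := by
    have hs' : 2 * ((i - i' : ℤ) : ℝ) + ((j - j' : ℤ) : ℝ) = 10 * s := by exact_mod_cast hs
    have ht' : ((j - j' : ℤ) : ℝ) = 4 * t := by exact_mod_cast ht
    rw [norm_sq_eq, PiLp.add_apply, PiLp.add_apply, center, pt_apply_zero, pt_apply_one, hs', ht']
    ring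
  rw [show (1 : ℝ) - 11 / 31 = 20 / 31 by norm_num] at hp hm
  rw [dist_center_add_center_add]
  refine le_of_pow_le_pow_left₀ two_ne_zero (norm_nonneg _) ?_
  rw [hnorm]
  exact sq_le_of_ne_zero (by positivity) sq_halfWidth h₀ h₁ hp hm hst hst₀

lemma mem_sameColourDists_of_vertical_pair : 137 / 31 ∈ sameColourDists (11 / 31) Λ := by
  have hmem : ((4 : ℤ) - 0, (-8 : ℤ) - 0) ∈ Λ := by
    rw [show ((4 : ℤ) - 0, (-8 : ℤ) - 0) = ((7 : ℤ), (-4 : ℤ)) - (3, 4) by decide]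
    exact sub_mem (AddSubgroup.subset_closure (by simp)) (AddSubgroup.subset_closure (by simp))
  refine ⟨4, -8, 0, 0, _, _, by decide, hmem, ⟨pt 0 (1 / 2), subset_convexHull ℝ _ (by simp), rfl⟩,
    ⟨pt 0 (-(1 / 2)), subset_convexHull ℝ _ (by simp), rfl⟩, ?_⟩
  rw [dist_center_add_center_add, ← abs_of_pos (by norm_num : (0 : ℝ) < 137 / 31),
    ← abs_norm, ← sq_eq_sq_iff_abs_eq_abs, norm_sq_eq]
  simp only [PiLp.add_apply, PiLp.sub_apply, center, pt_apply_zero, pt_apply_one]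
  norm_num

/-- with r = 11/31 and Λ = ⟨(7, -4), (3, 4)⟩ ≤ ℤ² of index 40,
the separation of the induced 40-colouring of the tiles T(i, j) equals the stated
value, and this value is attained. -/
theorem statement15 :
    (AddSubgroup.closure {(((7) : ℤ), ((-4) : ℤ)), (((3) : ℤ), ((4) : ℤ))}).index = 40 ∧
    IsLeast
      (sameColourDists (11 / 31)
        (AddSubgroup.closure {(((7) : ℤ), ((-4) : ℤ)), (((3) : ℤ), ((4) : ℤ))}))
      ((137 : ℝ) / 31) :=
  ⟨index_closure, mem_sameColourDists_of_vertical_pair, fun _ => le_of_mem_sameColourDists⟩
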